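/- Assuming the axiom of choice, in the path category EFF every propositional fibration is discrete. Consequently the class of discrete propositional fibrations in EFF satisfies propositional resizing: every propositional fibration belongs to it. -/

import Mathlib

namespace EffPaper

/-! ### A small kit for tracking by partial computable functions.

We encode "partial computable function" via Mathlib's `Partrec` on `ℕ →. ℕ`.
`CompComputes I O` says: there is a partial computable function which, on the input
`I x`, converges and outputs `O x` (for every `x` in some index type `X`).
`CompFinds I S` says: there is a partial computable function which, on the input
`I x`, converges and outputs some element of the set `S x`. -/

def CompComputes {X : Sort*} (I O : X → ℕ) : Prop :=
  ∃ F : ℕ →. ℕ, Partrec F ∧ ∀ x, O x ∈ F (I x)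

def CompFinds {X : Sort*} (I : X → ℕ) (S : X → Set ℕ) : Prop :=
  ∃ F : ℕ →. ℕ, Partrec F ∧ ∀ x, ∃ k, k ∈ F (I x) ∧ k ∈ S x

namespace CompComputes

protected theorem id {X : Sort*} (I : X → ℕ) : CompComputes I I :=
  ⟨fun n => Part.some n, Partrec.some, fun x => Part.mem_some _⟩

protected theorem const {X : Sort*} (I : X → ℕ) (c : ℕ) : CompComputes I fun _ => c :=
  ⟨fun _ => Part.some c, (Computable.const c).partrec, fun _ => Part.mem_some _⟩

protected theorem comp {X : Sort*} {I M O : X → ℕ}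
    (h₂ : CompComputes M O) (h₁ : CompComputes I M) : CompComputes I O := by
  obtain ⟨F₁, pF₁, s₁⟩ := h₁
  obtain ⟨F₂, pF₂, s₂⟩ := h₂
  refine ⟨fun n => (F₁ n).bind F₂, pF₁.bind (pF₂.comp Computable.snd), fun x => ?_⟩
  exact Part.mem_bind_iff.mpr ⟨M x, s₁ x, s₂ x⟩

protected theorem pair {X : Sort*} {I a b : X → ℕ}
    (ha : CompComputes I a) (hb : CompComputes I b) :
    CompComputes I (fun x => Nat.pair (a x) (b x)) := by
  obtain ⟨F₁, pF₁, s₁⟩ := ha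
  obtain ⟨F₂, pF₂, s₂⟩ := hb
  refine ⟨fun n => (F₁ n).bind fun u => (F₂ n).map fun v => Nat.pair u v, ?_, fun x => ?_⟩
  · refine pF₁.bind ?_
    have : Computable₂ fun (p : ℕ × ℕ) (v : ℕ) => Nat.pair p.2 v :=
      Primrec₂.to_comp (Primrec₂.natPair.comp (Primrec.snd.comp Primrec.fst) Primrec.snd)
    exact Partrec.map (pF₂.comp Computable.fst) this
  · exact Part.mem_bind_iff.mpr ⟨a x, s₁ x, (Part.mem_map_iff _).mpr ⟨b x, s₂ x, rfl⟩⟩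

protected theorem unpairL {X : Sort*} (I : X → ℕ) :
    CompComputes I (fun x => (I x).unpair.1) :=
  ⟨fun n => Part.some n.unpair.1,
    (Primrec.to_comp (Primrec.fst.comp Primrec.unpair)).partrec, fun _ => Part.mem_some _⟩

protected theorem unpairR {X : Sort*} (I : X → ℕ) :
    CompComputes I (fun x => (I x).unpair.2) :=
  ⟨fun n => Part.some n.unpair.2,
    (Primrec.to_comp (Primrec.snd.comp Primrec.unpair)).partrec, fun _ => Part.mem_some _⟩

protected theorem projL {X : Sort*} (a b : X → ℕ) :
    CompComputes (fun x => Nat.pair (a x) (b x)) a := by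
  have := CompComputes.unpairL (X := X) (fun x => Nat.pair (a x) (b x))
  simpa [Nat.unpair_pair] using this

protected theorem projR {X : Sort*} (a b : X → ℕ) :
    CompComputes (fun x => Nat.pair (a x) (b x)) b := by
  have := CompComputes.unpairR (X := X) (fun x => Nat.pair (a x) (b x))
  simpa [Nat.unpair_pair] using this

protected theorem precomp {X Y : Sort*} {I O : X → ℕ} (h : CompComputes I O) (e : Y → X) :
    CompComputes (fun y => I (e y)) (fun y => O (e y)) := by
  obtain ⟨F, pF, s⟩ := h
  exact ⟨F, pF, fun y => s (e y)⟩

protected theorem toFinds {X : Sort*} {I o : X → ℕ} {S : X → Set ℕ}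
    (h : CompComputes I o) (hm : ∀ x, o x ∈ S x) : CompFinds I S := by
  obtain ⟨F, pF, s⟩ := h
  exact ⟨F, pF, fun x => ⟨o x, s x, hm x⟩⟩

end CompComputes

namespace CompFinds

protected theorem toComputes {X : Sort*} {I : X → ℕ} {S : X → Set ℕ} (h : CompFinds I S) :
    ∃ o : X → ℕ, (∀ x, o x ∈ S x) ∧ CompComputes I o := by
  obtain ⟨F, pF, s⟩ := h
  refine ⟨fun x => (s x).choose, fun x => (s x).choose_spec.2, F, pF, fun x => (s x).choose_spec.1⟩

/-- Reindex a `CompFinds` along `e` and chase the input through a computable function. -/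
protected theorem via {Y X : Sort*} {J : X → ℕ} {S : X → Set ℕ} (h : CompFinds J S)
    {I : Y → ℕ} (e : Y → X) (hc : CompComputes I (fun y => J (e y))) :
    CompFinds I (fun y => S (e y)) := by
  obtain ⟨o, hm, hcc⟩ := h.toComputes
  exact CompComputes.toFinds ((hcc.precomp e).comp hc) (fun y => hm (e y))

end CompFinds

end EffPaper

namespace EffPaper

open CategoryTheory

universe v u

/-! ### Path categories (Van den Berg–Moerdijk style), abstractly.

A `PathStruct` on a category is a pair of classes of maps: fibrations and equivalences.
`IsPathCategory` expresses the seven axioms of a path category. -/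

structure PathStruct (C : Type u) [Category.{v} C] where
  Fib : ∀ ⦃X Y : C⦄, (X ⟶ Y) → Prop
  Eqv : ∀ ⦃X Y : C⦄, (X ⟶ Y) → Prop

section PathCatDefs

variable {C : Type u} [Category.{v} C]

/-- `T` is a terminal object. -/
def IsTerminalObj (T : C) : Prop := ∀ Z : C, ∃ f : Z ⟶ T, ∀ g : Z ⟶ T, g = f

/-- The square with projections `p₁, p₂` is a pullback of the cospan `f, g`. -/
def IsPB {P X Y Z : C} (p₁ : P ⟶ X) (p₂ : P ⟶ Y) (f : X ⟶ Z) (g : Y ⟶ Z) : Prop :=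
  p₁ ≫ f = p₂ ≫ g ∧ ∀ (Q : C) (q₁ : Q ⟶ X) (q₂ : Q ⟶ Y), q₁ ≫ f = q₂ ≫ g →
    ∃! h : Q ⟶ P, h ≫ p₁ = q₁ ∧ h ≫ p₂ = q₂

/-- `p₁, p₂` exhibit their common domain as a binary product of `X` and `Y`. -/
def IsBinProd {P X Y : C} (p₁ : P ⟶ X) (p₂ : P ⟶ Y) : Prop :=
  ∀ (Q : C) (q₁ : Q ⟶ X) (q₂ : Q ⟶ Y), ∃! h : Q ⟶ P, h ≫ p₁ = q₁ ∧ h ≫ p₂ = q₂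

variable (S : PathStruct C)

/-- `X → PX → X × X` is a path object for `X`: the first map is an equivalence, the
second (the pairing of `s` and `t` into a binary product `X × X`) is a fibration,
and the composite is the diagonal. -/
def IsPathObj {X PX : C} (r : X ⟶ PX) (s t : PX ⟶ X) : Prop :=
  S.Eqv r ∧ r ≫ s = 𝟙 X ∧ r ≫ t = 𝟙 X ∧
  ∃ (W : C) (π₁ π₂ : W ⟶ X) (h : PX ⟶ W),
    IsBinProd π₁ π₂ ∧ h ≫ π₁ = s ∧ h ≫ π₂ = t ∧ S.Fib h

/-- A path object for `p : X ⟶ I` in the slice path category `C(I)`: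
a factorisation of the fibrewise diagonal `X ⟶ X ×_I X` as an equivalence `r`
followed by a fibration. -/
def IsRelPathObj {X I PX : C} (p : X ⟶ I) (r : X ⟶ PX) (s t : PX ⟶ X) : Prop :=
  S.Eqv r ∧ r ≫ s = 𝟙 X ∧ r ≫ t = 𝟙 X ∧ s ≫ p = t ≫ p ∧
  ∃ (W : C) (π₁ π₂ : W ⟶ X) (h : PX ⟶ W),
    IsPB π₁ π₂ p p ∧ h ≫ π₁ = s ∧ h ≫ π₂ = t ∧ S.Fib h

/-- The seven axioms for a path category. -/
structure IsPathCategory : Prop where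
  fib_of_iso : ∀ {X Y : C} (f : X ⟶ Y), IsIso f → S.Fib f
  fib_comp : ∀ {X Y Z : C} (f : X ⟶ Y) (g : Y ⟶ Z), S.Fib f → S.Fib g → S.Fib (f ≫ g)
  terminal : ∃ T : C, IsTerminalObj T ∧ ∀ (X : C) (f : X ⟶ T), S.Fib f
  pullback : ∀ {X Y Z : C} (f : X ⟶ Z) (g : Y ⟶ Z), S.Fib f →
    ∃ (P : C) (p₁ : P ⟶ X) (p₂ : P ⟶ Y), IsPB p₁ p₂ f g ∧ S.Fib p₂
  eqv_of_iso : ∀ {X Y : C} (f : X ⟶ Y), IsIso f → S.Eqv f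
  two_out_of_six : ∀ {X Y Z W : C} (f : X ⟶ Y) (g : Y ⟶ Z) (h : Z ⟶ W),
    S.Eqv (f ≫ g) → S.Eqv (g ≫ h) →
    S.Eqv f ∧ S.Eqv g ∧ S.Eqv h ∧ S.Eqv (f ≫ g ≫ h)
  path_obj : ∀ X : C, ∃ (PX : C) (r : X ⟶ PX) (s t : PX ⟶ X), IsPathObj S r s t
  triv_fib_pb : ∀ {X Y Z P : C} (f : X ⟶ Z) (g : Y ⟶ Z) (p₁ : P ⟶ X) (p₂ : P ⟶ Y),
    S.Fib f → S.Eqv f → IsPB p₁ p₂ f g → S.Fib p₂ ∧ S.Eqv p₂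
  triv_fib_sect : ∀ {X Y : C} (f : X ⟶ Y), S.Fib f → S.Eqv f → ∃ s : Y ⟶ X, s ≫ f = 𝟙 Y

/-- Two parallel maps are homotopic: `(f,g)` factors through some path object. -/
def Homotopic {Z X : C} (f g : Z ⟶ X) : Prop :=
  ∃ (PX : C) (r : X ⟶ PX) (s t : PX ⟶ X), IsPathObj S r s t ∧
    ∃ H : Z ⟶ PX, H ≫ s = f ∧ H ≫ t = g

/-- `f` and `g` are fibrewise homotopic over the codomain of `p`:
`(f,g)` factors through some path object of `p` in the slice. -/
def FibHomotopic {Z X I : C} (p : X ⟶ I) (f g : Z ⟶ X) : Prop :=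
  ∃ (PX : C) (r : X ⟶ PX) (s t : PX ⟶ X), IsRelPathObj S p r s t ∧
    ∃ H : Z ⟶ PX, H ≫ s = f ∧ H ≫ t = g

/-- `IsNTypeFib S n f` says that `f` is a fibration of `(n-2)`-types; so `n = 0`
corresponds to hlevel `-2` (trivial fibrations), `n = 1` to propositions,
`n = 2` to sets and `n = 3` to groupoids. -/
def IsNTypeFib : ℕ → ∀ ⦃Y X : C⦄, (Y ⟶ X) → Prop
  | 0, _, _, f => S.Fib f ∧ S.Eqv f
  | n+1, Y, _, f => S.Fib f ∧ ∃ (PY W : C) (r : Y ⟶ PY) (s t : PY ⟶ Y)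
      (π₁ π₂ : W ⟶ Y) (h : PY ⟶ W),
      IsRelPathObj S f r s t ∧ IsPB π₁ π₂ f f ∧ h ≫ π₁ = s ∧ h ≫ π₂ = t ∧
      IsNTypeFib n h

/-- The (strictly) commutative square with vertical fibrations `g` (left) and `f` (right),
top `top` and bottom `bot`, is a homotopy pullback: the induced map to the actual
pullback is an equivalence. -/
def IsHomotopyPB {D Cc B A : C} (g : D ⟶ Cc) (top : D ⟶ B) (f : B ⟶ A) (bot : Cc ⟶ A) :
    Prop :=
  g ≫ bot = top ≫ f ∧ ∃ (P : C) (p₁ : P ⟶ Cc) (p₂ : P ⟶ B) (h : D ⟶ P),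
    IsPB p₁ p₂ bot f ∧ h ≫ p₁ = g ∧ h ≫ p₂ = top ∧ S.Eqv h

/-- A transport structure on the fibration `p : Y ⟶ X`, relative to the path object
`(PX, r, s, t)` and the pullback `(Q, q₁, q₂)` of `s : PX ⟶ X` along `p`:
a map `Γ : Y ×_X PX ⟶ Y` with `p ∘ Γ = t ∘ q₂` and `Γ ∘ (1_Y, r ∘ p) ≃_X 1_Y`. -/
def IsTransport {Y X PX Q : C} (p : Y ⟶ X) (r : X ⟶ PX) (s t : PX ⟶ X)
    (q₁ : Q ⟶ Y) (q₂ : Q ⟶ PX) (Γ : Q ⟶ Y) : Prop :=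
  Γ ≫ p = q₂ ≫ t ∧
  ∀ j : Y ⟶ Q, j ≫ q₁ = 𝟙 Y → j ≫ q₂ = p ≫ r → FibHomotopic S p (j ≫ Γ) (𝟙 Y)

/-- A fibration `p : Y ⟶ X` is univalent: whenever `f, g : Z ⟶ X` and
`w : f*p ⟶ g*p` is an equivalence over `Z`, there is a homotopy `H` from `f` to `g`
such that `w` is fibrewise homotopic over `Z` to the map induced by `H` and a
transport structure on `p`. -/
def Univalent {Y X : C} (p : Y ⟶ X) : Prop :=
  ∀ {Z Zf Zg : C} (f g : Z ⟶ X) (a₁ : Zf ⟶ Z) (a₂ : Zf ⟶ Y) (b₁ : Zg ⟶ Z) (b₂ : Zg ⟶ Y),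
    IsPB a₁ a₂ f p → IsPB b₁ b₂ g p →
    ∀ w : Zf ⟶ Zg, w ≫ b₁ = a₁ → S.Eqv w →
    ∃ (PX Q : C) (r : X ⟶ PX) (s t : PX ⟶ X) (q₁ : Q ⟶ Y) (q₂ : Q ⟶ PX) (Γ : Q ⟶ Y)
      (H : Z ⟶ PX) (k : Zf ⟶ Q) (w' : Zf ⟶ Zg),
      IsPathObj S r s t ∧ IsPB q₁ q₂ p s ∧ IsTransport S p r s t q₁ q₂ Γ ∧
      H ≫ s = f ∧ H ≫ t = g ∧
      k ≫ q₁ = a₂ ∧ k ≫ q₂ = a₁ ≫ H ∧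
      w' ≫ b₁ = a₁ ∧ w' ≫ b₂ = k ≫ Γ ∧
      FibHomotopic S b₁ w w'

/-- `π : E ⟶ U` is a representation for the class `Small`: it is small, and every
small fibration is a homotopy pullback of it. -/
def IsRepresentation (Small : ∀ ⦃X Y : C⦄, (X ⟶ Y) → Prop) {E U : C} (π : E ⟶ U) : Prop :=
  Small π ∧ ∀ ⦃B A : C⦄ (f : B ⟶ A), Small f →
    ∃ (c : A ⟶ U) (top : B ⟶ E), IsHomotopyPB S f top π c

/-- `M` is a good lift for the universal property of the homotopy Π-type
`(pE, u₁, u₂, ε)` of `g` along `f`, at the map `h : A ⟶ X` with chosen pullback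
`(Ah, v₁, v₂)` of `h` along `f` and `m : f*h ⟶ g` over `Y`. -/
def HPiLiftGood {Y X Z E F A Ah : C} (f : Y ⟶ X) (g : Z ⟶ Y) (pE : E ⟶ X)
    (u₁ : F ⟶ E) (u₂ : F ⟶ Y) (ε : F ⟶ Z)
    (h : A ⟶ X) (v₁ : Ah ⟶ A) (v₂ : Ah ⟶ Y) (m : Ah ⟶ Z) (M : A ⟶ E) : Prop :=
  M ≫ pE = h ∧ ∀ fM : Ah ⟶ F, fM ≫ u₁ = v₁ ≫ M → fM ≫ u₂ = v₂ →
    FibHomotopic S g (fM ≫ ε) m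

/-- `(pE, u₁, u₂, ε)` is a homotopy Π-type of the fibration `g : Z ⟶ Y` along the
fibration `f : Y ⟶ X`.  Here `pE : E ⟶ X` is the Π-fibration, `(F, u₁, u₂)` is a
pullback of `pE` along `f`, and `ε : f*pE ⟶ g` is the counit (a map over `Y`). -/
structure IsHPi {Y X Z E F : C} (f : Y ⟶ X) (g : Z ⟶ Y) (pE : E ⟶ X)
    (u₁ : F ⟶ E) (u₂ : F ⟶ Y) (ε : F ⟶ Z) : Prop where
  fib : S.Fib pE
  pb : IsPB u₁ u₂ pE f
  over_ : ε ≫ g = u₂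
  lift : ∀ {A Ah : C} (h : A ⟶ X) (v₁ : Ah ⟶ A) (v₂ : Ah ⟶ Y), IsPB v₁ v₂ h f →
    ∀ m : Ah ⟶ Z, m ≫ g = v₂ →
      ∃ M : A ⟶ E, HPiLiftGood S f g pE u₁ u₂ ε h v₁ v₂ m M
  unique : ∀ {A Ah : C} (h : A ⟶ X) (v₁ : Ah ⟶ A) (v₂ : Ah ⟶ Y), IsPB v₁ v₂ h f →
    ∀ m : Ah ⟶ Z, m ≫ g = v₂ → ∀ M M' : A ⟶ E,
      HPiLiftGood S f g pE u₁ u₂ ε h v₁ v₂ m M →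
      HPiLiftGood S f g pE u₁ u₂ ε h v₁ v₂ m M' →
      FibHomotopic S pE M M'

/-- The path category has homotopy Π-types. -/
def HasHPi : Prop := ∀ ⦃Y X Z : C⦄ (f : Y ⟶ X) (g : Z ⟶ Y), S.Fib f → S.Fib g →
  ∃ (E F : C) (pE : E ⟶ X) (u₁ : F ⟶ E) (u₂ : F ⟶ Y) (ε : F ⟶ Z),
    IsHPi S f g pE u₁ u₂ ε

/-- A class of small fibrations: contained in the fibrations, containing all
isomorphisms, closed under composition and stable under homotopy pullback. -/
def IsSmallClass (Small : ∀ ⦃X Y : C⦄, (X ⟶ Y) → Prop) : Prop :=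
  (∀ ⦃X Y : C⦄ (f : X ⟶ Y), Small f → S.Fib f) ∧
  (∀ ⦃X Y : C⦄ (f : X ⟶ Y), IsIso f → Small f) ∧
  (∀ ⦃X Y Z : C⦄ (f : X ⟶ Y) (g : Y ⟶ Z), Small f → Small g → Small (f ≫ g)) ∧
  (∀ ⦃D Cc B A : C⦄ (g : D ⟶ Cc) (top : D ⟶ B) (f : B ⟶ A) (bot : Cc ⟶ A),
    S.Fib g → S.Fib f → Small f → IsHomotopyPB S g top f bot → Small g)

/-- The class `Small` is closed under homotopy Π-types along arbitrary fibrations: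
it is impredicative (polymorphic). -/
def ClosedUnderHPi (Small : ∀ ⦃X Y : C⦄, (X ⟶ Y) → Prop) : Prop :=
  ∀ ⦃Y X Z : C⦄ (f : Y ⟶ X) (g : Z ⟶ Y), S.Fib f → Small g →
    ∀ ⦃E F : C⦄ (pE : E ⟶ X) (u₁ : F ⟶ E) (u₂ : F ⟶ Y) (ε : F ⟶ Z),
      IsHPi S f g pE u₁ u₂ ε → Small pE

end PathCatDefs

end EffPaper
open CategoryTheory
namespace EffPaper
-- [assume p1 kit present]

/-! ### The category `EFF`. -/

/-- An object of `EFF`: a set `A`, a realizer function `α : A → ℕ`, sets of 1-cells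
`hom a a' ⊆ ℕ`, and partial computable functions computing identity, inverse and
composite 1-cells from the realizers of the relevant data. -/
structure EffObj : Type 1 where
  A : Type
  α : A → ℕ
  hom : A → A → Set ℕ
  idc : CompFinds (fun a : A => α a) (fun a => hom a a)
  invc : CompFinds
    (fun x : {p : A × A × ℕ // p.2.2 ∈ hom p.1 p.2.1} =>
      Nat.pair (α x.1.1) (Nat.pair (α x.1.2.1) x.1.2.2))
    (fun x => hom x.1.2.1 x.1.1)
  compc : CompFinds
    (fun x : {p : A × A × A × ℕ × ℕ //
        p.2.2.2.1 ∈ hom p.1 p.2.1 ∧ p.2.2.2.2 ∈ hom p.2.1 p.2.2.1} =>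
      Nat.pair (α x.1.1) (Nat.pair (α x.1.2.1) (Nat.pair (α x.1.2.2.1)
        (Nat.pair x.1.2.2.2.1 x.1.2.2.2.2))))
    (fun x => hom x.1.1 x.1.2.2.1)

/-- The 1-cells of an object of `EFF` between `a` and `a'`. -/
def EffObj.Cell (A : EffObj) (a a' : A.A) : Type := {n : ℕ // n ∈ A.hom a a'}

/-- A morphism of `EFF`: a function on 0-cells and functions on 1-cells, both
computably tracked. -/
structure EffHom (B A : EffObj) : Type where
  f0 : B.A → A.A
  f1 : ∀ b b' : B.A, B.Cell b b' → A.Cell (f0 b) (f0 b')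
  tr0 : CompComputes (fun b : B.A => B.α b) (fun b => A.α (f0 b))
  tr1 : CompComputes
    (fun x : (b : B.A) × (b' : B.A) × B.Cell b b' =>
      Nat.pair (B.α x.1) (Nat.pair (B.α x.2.1) x.2.2.val))
    (fun x => (f1 x.1 x.2.1 x.2.2).val)

instance : Category.{0} EffObj where
  Hom B A := EffHom B A
  id A :=
    { f0 := fun a => a
      f1 := fun _ _ π => π
      tr0 := CompComputes.id _
      tr1 := (CompComputes.projR _ _).comp (CompComputes.projR _ _) }
  comp {X Y Z} f g :=
    { f0 := fun b => g.f0 (f.f0 b)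
      f1 := fun b b' π => g.f1 _ _ (f.f1 b b' π)
      tr0 := (g.tr0.precomp f.f0).comp f.tr0
      tr1 := by
        have hg := g.tr1.precomp
          (fun x : (b : X.A) × (b' : X.A) × X.Cell b b' =>
            (⟨f.f0 x.1, f.f0 x.2.1, f.f1 x.1 x.2.1 x.2.2⟩ :
              (b : Y.A) × (b' : Y.A) × Y.Cell b b'))
        refine hg.comp ?_
        refine CompComputes.pair ?_ (CompComputes.pair ?_ f.tr1)
        · exact (f.tr0.precomp (fun x : (b : X.A) × (b' : X.A) × X.Cell b b' => x.1)).comp (CompComputes.projL _ _)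
        · exact (f.tr0.precomp (fun x : (b : X.A) × (b' : X.A) × X.Cell b b' => x.2.1)).comp
            ((CompComputes.projL _ _).comp (CompComputes.projR _ _)) }

end EffPaper
namespace EffPaper
open CategoryTheory

/-! ### Homotopies, equivalences and fibrations in `EFF`. -/

/-- Two parallel maps in `EFF` are homotopic if there is a partial computable function
computing, from the realizer of each `b`, a 1-cell from `f b` to `g b`. -/
def EffHomotopic {B A : EffObj} (f g : EffHom B A) : Prop :=
  CompFinds (fun b : B.A => B.α b) (fun b => A.hom (f.f0 b) (g.f0 b))

/-- A map in `EFF` is a (homotopy) equivalence if it has a homotopy inverse. -/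
def EffEqv {B A : EffObj} (f : B ⟶ A) : Prop :=
  ∃ g : A ⟶ B, EffHomotopic (f ≫ g) (𝟙 B) ∧ EffHomotopic (g ≫ f) (𝟙 A)

/-- A map in `EFF` is a fibration: (i) 1-cells `π : f b → a` downstairs can be
computably lifted to 1-cells `ρ : b → b'` upstairs with `f b' = a`, `f ρ = π`;
(ii) given `ρ ∈ ℬ(b,b')` and `π ∈ 𝒜(fb,fb')` one can compute `ρ' ∈ ℬ(b,b')`
with `f ρ' = π`. -/
def EffFib {B A : EffObj} (f : B ⟶ A) : Prop :=
  (∃ φ ψ : ℕ →. ℕ, Partrec φ ∧ Partrec ψ ∧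
    ∀ (b : B.A) (a : A.A) (π : ℕ), π ∈ A.hom (f.f0 b) a →
      ∃ (b' : B.A) (ρ : B.Cell b b'),
        f.f0 b' = a ∧ (f.f1 b b' ρ).val = π ∧
        B.α b' ∈ φ (Nat.pair (B.α b) (Nat.pair (A.α a) π)) ∧
        ρ.val ∈ ψ (Nat.pair (B.α b) (Nat.pair (A.α a) π))) ∧
  (∃ χ : ℕ →. ℕ, Partrec χ ∧
    ∀ (b b' : B.A) (ρ : B.Cell b b') (π : ℕ), π ∈ A.hom (f.f0 b) (f.f0 b') →
      ∃ ρ' : B.Cell b b', (f.f1 b b' ρ').val = π ∧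
        ρ'.val ∈ χ (Nat.pair (B.α b) (Nat.pair (B.α b') (Nat.pair ρ.val π))))

/-- The path structure on `EFF`: fibrations and (homotopy) equivalences. -/
def EffPS : PathStruct EffObj where
  Fib := fun {_ _} f => EffFib f
  Eqv := fun {_ _} f => EffEqv f

/-- A fibration in `EFF` is a standard discrete fibration if elements of the domain
are determined by their image and their realizer. -/
def EffStdDisc {B A : EffObj} (f : B ⟶ A) : Prop :=
  EffFib f ∧ ∀ b b' : B.A, f.f0 b = f.f0 b' → B.α b = B.α b' → b = b'

/-- A fibration in `EFF` is discrete if it can be written as a standard discrete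
fibration after an equivalence. -/
def EffDisc {B A : EffObj} (f : B ⟶ A) : Prop :=
  EffFib f ∧ ∃ (B' : EffObj) (w : B ⟶ B') (g : B' ⟶ A),
    EffEqv w ∧ EffStdDisc g ∧ w ≫ g = f

end EffPaper

/-!
For a propositional fibration `f : B ⟶ A`, the path object `(r, s, t)` of `f` over `A` maps to
`B ×_A B` by a trivial fibration. Its computable sections turn two points `b, b'` of one fibre,
seen as a point of the strict kernel pair of `f`, into a path `u` with `s u = b` and `t u = b'`;
a homotopy from `r (d u)` to `u`, for `d` a homotopy inverse of `r`, then gives a 1-cell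
`b → b'` computable from the realizers of `b` and `b'`.

With such cells, `f` factors as `B → {(f b, α b)} → A`. The second map is a standard discrete
fibration, and the first is an equivalence: its homotopy inverse chooses a preimage of each
pair (this is where choice is used), and the cells between points of a fibre supply both the
action on 1-cells and the homotopies.
-/

namespace EffPaper

section Computes

variable {X : Sort*}

namespace CompComputes

theorem congr_in {I I' O : X → ℕ} (h : CompComputes I O) (e : ∀ x, I x = I' x) :
    CompComputes I' O :=
  funext e ▸ h

theorem congr_out {I O O' : X → ℕ} (h : CompComputes I O) (e : ∀ x, O x = O' x) :
    CompComputes I O' :=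
  funext e ▸ h

theorem proj3_1 (a b c : X → ℕ) :
    CompComputes (fun x => Nat.pair (a x) (Nat.pair (b x) (c x))) a :=
  CompComputes.projL _ _

theorem proj3_2 (a b c : X → ℕ) :
    CompComputes (fun x => Nat.pair (a x) (Nat.pair (b x) (c x))) b :=
  (CompComputes.projL b c).comp (CompComputes.projR a _)

theorem proj3_3 (a b c : X → ℕ) :
    CompComputes (fun x => Nat.pair (a x) (Nat.pair (b x) (c x))) c :=
  (CompComputes.projR b c).comp (CompComputes.projR a _)

theorem proj5_1 (a b c d e : X → ℕ) :
    CompComputes (fun x => Nat.pair (a x) (Nat.pair (b x) (Nat.pair (c x)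
      (Nat.pair (d x) (e x))))) a :=
  CompComputes.projL _ _

theorem proj5_2 (a b c d e : X → ℕ) :
    CompComputes (fun x => Nat.pair (a x) (Nat.pair (b x) (Nat.pair (c x)
      (Nat.pair (d x) (e x))))) b :=
  (CompComputes.projL b _).comp (CompComputes.projR a _)

theorem proj5_3 (a b c d e : X → ℕ) :
    CompComputes (fun x => Nat.pair (a x) (Nat.pair (b x) (Nat.pair (c x)
      (Nat.pair (d x) (e x))))) c :=
  (proj3_2 b c _).comp (CompComputes.projR a _)

theorem proj5_4 (a b c d e : X → ℕ) :
    CompComputes (fun x => Nat.pair (a x) (Nat.pair (b x) (Nat.pair (c x)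
      (Nat.pair (d x) (e x))))) d :=
  ((CompComputes.projL d e).comp (proj3_3 b c _)).comp (CompComputes.projR a _)

theorem proj5_5 (a b c d e : X → ℕ) :
    CompComputes (fun x => Nat.pair (a x) (Nat.pair (b x) (Nat.pair (c x)
      (Nat.pair (d x) (e x))))) e :=
  ((CompComputes.projR d e).comp (proj3_3 b c _)).comp (CompComputes.projR a _)

end CompComputes

namespace EffObj

variable (D : EffObj) {I : X → ℕ}

abbrev Arrow : Type := (a : D.A) × (a' : D.A) × D.Cell a a'

abbrev arrowRealizer (y : D.Arrow) : ℕ := Nat.pair (D.α y.1) (Nat.pair (D.α y.2.1) y.2.2.val)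

theorem exists_id_computes (a : X → D.A) (ha : CompComputes I fun x => D.α (a x)) :
    ∃ σ : X → ℕ, (∀ x, σ x ∈ D.hom (a x) (a x)) ∧ CompComputes I σ := by
  obtain ⟨o, ho, co⟩ := D.idc.toComputes
  exact ⟨fun x => o (a x), fun x => ho (a x), (co.precomp a).comp ha⟩

theorem exists_inv_computes (a a' : X → D.A) (π : X → ℕ) (hπ : ∀ x, π x ∈ D.hom (a x) (a' x))
    (ha : CompComputes I fun x => D.α (a x)) (ha' : CompComputes I fun x => D.α (a' x))
    (cπ : CompComputes I π) :
    ∃ σ : X → ℕ, (∀ x, σ x ∈ D.hom (a' x) (a x)) ∧ CompComputes I σ := by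
  obtain ⟨o, ho, co⟩ := D.invc.toComputes
  let y x : {p : D.A × D.A × ℕ // p.2.2 ∈ D.hom p.1 p.2.1} := ⟨(a x, a' x, π x), hπ x⟩
  exact ⟨fun x => o (y x), fun x => ho (y x), (co.precomp y).comp (ha.pair (ha'.pair cπ))⟩

theorem exists_comp_computes (a₀ a₁ a₂ : X → D.A) (π₀ π₁ : X → ℕ)
    (hπ₀ : ∀ x, π₀ x ∈ D.hom (a₀ x) (a₁ x)) (hπ₁ : ∀ x, π₁ x ∈ D.hom (a₁ x) (a₂ x))
    (ha₀ : CompComputes I fun x => D.α (a₀ x)) (ha₁ : CompComputes I fun x => D.α (a₁ x))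
    (ha₂ : CompComputes I fun x => D.α (a₂ x)) (cπ₀ : CompComputes I π₀)
    (cπ₁ : CompComputes I π₁) :
    ∃ σ : X → ℕ, (∀ x, σ x ∈ D.hom (a₀ x) (a₂ x)) ∧ CompComputes I σ := by
  obtain ⟨o, ho, co⟩ := D.compc.toComputes
  let y x : {p : D.A × D.A × D.A × ℕ × ℕ //
      p.2.2.2.1 ∈ D.hom p.1 p.2.1 ∧ p.2.2.2.2 ∈ D.hom p.2.1 p.2.2.1} :=
    ⟨(a₀ x, a₁ x, a₂ x, π₀ x, π₁ x), hπ₀ x, hπ₁ x⟩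
  exact ⟨fun x => o (y x), fun x => ho (y x),
    (co.precomp y).comp (ha₀.pair (ha₁.pair (ha₂.pair (cπ₀.pair cπ₁))))⟩

end EffObj

namespace EffHom

theorem ext {B A : EffObj} {f g : EffHom B A} (h₀ : f.f0 = g.f0)
    (h₁ : ∀ b b' (ρ : B.Cell b b'), (f.f1 b b' ρ).val = (g.f1 b b' ρ).val) : f = g := by
  obtain ⟨f0, f1, _, _⟩ := f
  obtain ⟨g0, g1, _, _⟩ := g
  subst h₀
  obtain rfl : f1 = g1 := funext fun b => funext fun b' => funext fun ρ => Subtype.ext (h₁ b b' ρ)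
  rfl

theorem congr_f0 {B A : EffObj} {f g : B ⟶ A} (h : f = g) (b : B.A) : f.f0 b = g.f0 b := by
  rw [h]

theorem computes_f1 {B A : EffObj} (f : B ⟶ A) {I : X → ℕ} {b b' : X → B.A}
    (ρ : ∀ x, B.Cell (b x) (b' x)) (hb : CompComputes I fun x => B.α (b x))
    (hb' : CompComputes I fun x => B.α (b' x)) (cρ : CompComputes I fun x => (ρ x).val) :
    CompComputes I fun x => (f.f1 (b x) (b' x) (ρ x)).val :=
  (f.tr1.precomp fun x => (⟨b x, b' x, ρ x⟩ : B.Arrow)).comp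
    (hb.pair (hb'.pair cρ))

end EffHom

namespace EffFib

variable {B A : EffObj} {f : B ⟶ A} {I : X → ℕ}

theorem lift_computes (hf : EffFib f) (b : X → B.A) (a : X → A.A) (π : X → ℕ)
    (hπ : ∀ x, π x ∈ A.hom (f.f0 (b x)) (a x)) (hb : CompComputes I fun x => B.α (b x))
    (ha : CompComputes I fun x => A.α (a x)) (cπ : CompComputes I π) :
    ∃ (b' : X → B.A) (ρ : ∀ x, B.Cell (b x) (b' x)),
      (∀ x, f.f0 (b' x) = a x) ∧ (∀ x, (f.f1 (b x) (b' x) (ρ x)).val = π x) ∧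
      CompComputes I (fun x => B.α (b' x)) ∧ CompComputes I (fun x => (ρ x).val) := by
  obtain ⟨⟨φ, ψ, pφ, pψ, hs⟩, -⟩ := hf
  choose b' ρ hb' hρ hφ hψ using fun x => hs (b x) (a x) (π x) (hπ x)
  have cI := hb.pair (ha.pair cπ)
  exact ⟨b', ρ, hb', hρ, CompComputes.comp ⟨φ, pφ, hφ⟩ cI, CompComputes.comp ⟨ψ, pψ, hψ⟩ cI⟩

theorem adjust_computes (hf : EffFib f) (b b' : X → B.A) (ρ : ∀ x, B.Cell (b x) (b' x))
    (π : X → ℕ) (hπ : ∀ x, π x ∈ A.hom (f.f0 (b x)) (f.f0 (b' x)))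
    (hb : CompComputes I fun x => B.α (b x)) (hb' : CompComputes I fun x => B.α (b' x))
    (cρ : CompComputes I fun x => (ρ x).val) (cπ : CompComputes I π) :
    ∃ ρ' : ∀ x, B.Cell (b x) (b' x),
      (∀ x, (f.f1 (b x) (b' x) (ρ' x)).val = π x) ∧ CompComputes I (fun x => (ρ' x).val) := by
  obtain ⟨-, χ, pχ, hs⟩ := hf
  choose ρ' hρ' hχ using fun x => hs (b x) (b' x) (ρ x) (π x) (hπ x)
  exact ⟨ρ', hρ', CompComputes.comp ⟨χ, pχ, hχ⟩ (hb.pair (hb'.pair (cρ.pair cπ)))⟩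

end EffFib

end Computes

namespace EffPullback

variable {A B C : EffObj} (f : B ⟶ A) (g : C ⟶ A)

def Pt : Type := {p : B.A × C.A // f.f0 p.1 = g.f0 p.2}

def realizer (p : Pt f g) : ℕ := Nat.pair (B.α p.1.1) (C.α p.1.2)

def cells (p p' : Pt f g) : Set ℕ :=
  {n | ∃ (h₁ : n.unpair.1 ∈ B.hom p.1.1 p'.1.1) (h₂ : n.unpair.2 ∈ C.hom p.1.2 p'.1.2),
    (f.f1 _ _ ⟨_, h₁⟩).val = (g.f1 _ _ ⟨_, h₂⟩).val}

variable {f g} {X : Sort*} {I : X → ℕ}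

theorem pair_mem_cells {p p' : Pt f g} (ρ : B.Cell p.1.1 p'.1.1) (τ : C.Cell p.1.2 p'.1.2)
    (h : (f.f1 _ _ ρ).val = (g.f1 _ _ τ).val) : Nat.pair ρ.val τ.val ∈ cells f g p p' := by
  obtain ⟨n, hn⟩ := ρ
  obtain ⟨m, hm⟩ := τ
  refine ⟨by simpa using hn, by simpa using hm, ?_⟩
  simpa using h

theorem computes_fst {p : X → Pt f g} (hp : CompComputes I fun x => realizer f g (p x)) :
    CompComputes I fun x => B.α (p x).1.1 :=
  (CompComputes.projL _ _).comp hp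

theorem computes_snd {p : X → Pt f g} (hp : CompComputes I fun x => realizer f g (p x)) :
    CompComputes I fun x => C.α (p x).1.2 :=
  (CompComputes.projR _ _).comp hp

/-- The `B`-component is only a starting point: it is adjusted along the fibration `f` to lie
over the image of the `C`-component. -/
theorem exists_cells_computes (hf : EffFib f) {p p' : X → Pt f g}
    (hp : CompComputes I fun x => realizer f g (p x))
    (hp' : CompComputes I fun x => realizer f g (p' x))
    (ρ : ∀ x, B.Cell (p x).1.1 (p' x).1.1) (τ : ∀ x, C.Cell (p x).1.2 (p' x).1.2)
    (cρ : CompComputes I fun x => (ρ x).val) (cτ : CompComputes I fun x => (τ x).val) :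
    ∃ n : X → ℕ, (∀ x, n x ∈ cells f g (p x) (p' x)) ∧ CompComputes I n := by
  have hπ x : (g.f1 _ _ (τ x)).val ∈ A.hom (f.f0 (p x).1.1) (f.f0 (p' x).1.1) := by
    rw [(p x).2, (p' x).2]
    exact (g.f1 _ _ (τ x)).2
  obtain ⟨ρ', hρ', cρ'⟩ := hf.adjust_computes _ _ ρ _ hπ (computes_fst hp) (computes_fst hp') cρ
    (g.computes_f1 τ (computes_snd hp) (computes_snd hp') cτ)
  exact ⟨fun x => Nat.pair (ρ' x).val (τ x).val, fun x => pair_mem_cells _ _ (hρ' x),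
    cρ'.pair cτ⟩

theorem exists_inv_cells_computes (hf : EffFib f) {p p' : X → Pt f g} {n : X → ℕ}
    (hn : ∀ x, n x ∈ cells f g (p x) (p' x)) (hp : CompComputes I fun x => realizer f g (p x))
    (hp' : CompComputes I fun x => realizer f g (p' x)) (cn : CompComputes I n) :
    ∃ m : X → ℕ, (∀ x, m x ∈ cells f g (p' x) (p x)) ∧ CompComputes I m := by
  obtain ⟨ρ, hρ, cρ⟩ := B.exists_inv_computes _ _ _ (fun x => (hn x).fst) (computes_fst hp)
    (computes_fst hp') ((CompComputes.unpairL _).comp cn)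
  obtain ⟨τ, hτ, cτ⟩ := C.exists_inv_computes _ _ _ (fun x => (hn x).snd.fst) (computes_snd hp)
    (computes_snd hp') ((CompComputes.unpairR _).comp cn)
  exact exists_cells_computes hf hp' hp (fun x => ⟨ρ x, hρ x⟩) (fun x => ⟨τ x, hτ x⟩) cρ cτ

theorem exists_comp_cells_computes (hf : EffFib f) {p₀ p₁ p₂ : X → Pt f g} {n₀ n₁ : X → ℕ}
    (hn₀ : ∀ x, n₀ x ∈ cells f g (p₀ x) (p₁ x)) (hn₁ : ∀ x, n₁ x ∈ cells f g (p₁ x) (p₂ x))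
    (hp₀ : CompComputes I fun x => realizer f g (p₀ x))
    (hp₁ : CompComputes I fun x => realizer f g (p₁ x))
    (hp₂ : CompComputes I fun x => realizer f g (p₂ x))
    (cn₀ : CompComputes I n₀) (cn₁ : CompComputes I n₁) :
    ∃ m : X → ℕ, (∀ x, m x ∈ cells f g (p₀ x) (p₂ x)) ∧ CompComputes I m := by
  obtain ⟨ρ, hρ, cρ⟩ := B.exists_comp_computes _ _ _ _ _ (fun x => (hn₀ x).fst)
    (fun x => (hn₁ x).fst) (computes_fst hp₀) (computes_fst hp₁) (computes_fst hp₂)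
    ((CompComputes.unpairL _).comp cn₀) ((CompComputes.unpairL _).comp cn₁)
  obtain ⟨τ, hτ, cτ⟩ := C.exists_comp_computes _ _ _ _ _ (fun x => (hn₀ x).snd.fst)
    (fun x => (hn₁ x).snd.fst) (computes_snd hp₀) (computes_snd hp₁) (computes_snd hp₂)
    ((CompComputes.unpairR _).comp cn₀) ((CompComputes.unpairR _).comp cn₁)
  exact exists_cells_computes hf hp₀ hp₂ (fun x => ⟨ρ x, hρ x⟩) (fun x => ⟨τ x, hτ x⟩) cρ cτ

variable (g)

def obj (hf : EffFib f) : EffObj where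
  A := Pt f g
  α := realizer f g
  hom := cells f g
  idc := by
    have hp : CompComputes (realizer f g) fun p => realizer f g p := CompComputes.id _
    obtain ⟨ρ, hρ, cρ⟩ := B.exists_id_computes (fun p : Pt f g => p.1.1) (computes_fst hp)
    obtain ⟨τ, hτ, cτ⟩ := C.exists_id_computes (fun p : Pt f g => p.1.2) (computes_snd hp)
    obtain ⟨n, hn, cn⟩ := exists_cells_computes hf hp hp (fun p => ⟨ρ p, hρ p⟩)
      (fun p => ⟨τ p, hτ p⟩) cρ cτ
    exact cn.toFinds hn
  invc := by
    obtain ⟨m, hm, cm⟩ := exists_inv_cells_computes hf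
      (fun y : {x : Pt f g × Pt f g × ℕ // x.2.2 ∈ cells f g x.1 x.2.1} => y.2)
      (CompComputes.proj3_1 _ _ _) (CompComputes.proj3_2 _ _ _) (CompComputes.proj3_3 _ _ _)
    exact cm.toFinds hm
  compc := by
    obtain ⟨m, hm, cm⟩ := exists_comp_cells_computes hf
      (fun y : {x : Pt f g × Pt f g × Pt f g × ℕ × ℕ //
        x.2.2.2.1 ∈ cells f g x.1 x.2.1 ∧ x.2.2.2.2 ∈ cells f g x.2.1 x.2.2.1} => y.2.1)
      (fun y => y.2.2) (CompComputes.proj5_1 _ _ _ _ _) (CompComputes.proj5_2 _ _ _ _ _)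
      (CompComputes.proj5_3 _ _ _ _ _) (CompComputes.proj5_4 _ _ _ _ _)
      (CompComputes.proj5_5 _ _ _ _ _)
    exact cm.toFinds hm

def fst (hf : EffFib f) : obj g hf ⟶ B where
  f0 p := p.1.1
  f1 _ _ n := ⟨n.val.unpair.1, n.2.fst⟩
  tr0 := computes_fst (CompComputes.id _)
  tr1 := (CompComputes.unpairL _).comp (CompComputes.proj3_3 _ _ _)

def snd (hf : EffFib f) : obj g hf ⟶ C where
  f0 p := p.1.2
  f1 _ _ n := ⟨n.val.unpair.2, n.2.snd.fst⟩
  tr0 := computes_snd (CompComputes.id _)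
  tr1 := (CompComputes.unpairR _).comp (CompComputes.proj3_3 _ _ _)

theorem condition (hf : EffFib f) : fst g hf ≫ f = snd g hf ≫ g :=
  EffHom.ext (funext fun p => p.2) fun _ _ n => n.2.snd.snd

end EffPullback

/-- Any two points in a fibre of `f` (a point of the strict kernel pair) are joined by a 1-cell
computable from their realizers. -/
def FibreConnected {B A : EffObj} (f : B ⟶ A) : Prop :=
  CompFinds (EffPullback.realizer f f) fun q => B.hom q.1.1 q.1.2

theorem FibreConnected.exists_cell_computes {B A : EffObj} {f : B ⟶ A} (hc : FibreConnected f)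
    {X : Sort*} {I : X → ℕ} (b b' : X → B.A) (hbb' : ∀ x, f.f0 (b x) = f.f0 (b' x))
    (hb : CompComputes I fun x => B.α (b x)) (hb' : CompComputes I fun x => B.α (b' x)) :
    ∃ σ : X → ℕ, (∀ x, σ x ∈ B.hom (b x) (b' x)) ∧ CompComputes I σ := by
  obtain ⟨c, hc, cc⟩ := hc.toComputes
  exact ⟨fun x => c ⟨(b x, b' x), hbb' x⟩, fun x => hc ⟨(b x, b' x), hbb' x⟩,
    (cc.precomp _).comp (hb.pair hb')⟩

theorem EffFib.exists_section_of_eqv {Y W : EffObj} {m : Y ⟶ W} (hm : EffFib m)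
    (he : EffEqv m) :
    ∃ P : W.A → Y.A, (∀ w, m.f0 (P w) = w) ∧ CompComputes W.α fun w => Y.α (P w) := by
  obtain ⟨e, -, H⟩ := he
  obtain ⟨γ, hγ, cγ⟩ := H.toComputes
  obtain ⟨P, -, hP, -, cP, -⟩ := hm.lift_computes e.f0 id γ hγ e.tr0 (CompComputes.id _) cγ
  exact ⟨P, hP, cP⟩

theorem exists_cell_of_path {B PB : EffObj} {r : B ⟶ PB} {s t : PB ⟶ B} (hr : EffEqv r)
    (hs : r ≫ s = 𝟙 B) (ht : r ≫ t = 𝟙 B) :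
    ∃ c : PB.A → ℕ, (∀ u, c u ∈ B.hom (s.f0 u) (t.f0 u)) ∧ CompComputes PB.α c := by
  obtain ⟨d, -, H⟩ := hr
  obtain ⟨δ, hδ, cδ⟩ := H.toComputes
  have cd : CompComputes PB.α fun u => B.α (d.f0 u) := d.tr0
  have crd : CompComputes PB.α fun u => PB.α (r.f0 (d.f0 u)) := (r.tr0.precomp d.f0).comp cd
  let ε u : PB.Cell (r.f0 (d.f0 u)) u := ⟨δ u, hδ u⟩
  have cs := s.computes_f1 ε crd (CompComputes.id _) cδ
  have ct := t.computes_f1 ε crd (CompComputes.id _) cδ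
  have hs₀ b : s.f0 (r.f0 b) = b := EffHom.congr_f0 hs b
  have ht₀ b : t.f0 (r.f0 b) = b := EffHom.congr_f0 ht b
  have hsu u : (s.f1 _ _ (ε u)).val ∈ B.hom (d.f0 u) (s.f0 u) := by
    simpa only [hs₀] using (s.f1 _ _ (ε u)).2
  have htu u : (t.f1 _ _ (ε u)).val ∈ B.hom (d.f0 u) (t.f0 u) := by
    simpa only [ht₀] using (t.f1 _ _ (ε u)).2
  obtain ⟨σ, hσ, cσ⟩ := B.exists_inv_computes _ _ _ hsu cd s.tr0 cs
  exact B.exists_comp_computes _ _ _ _ _ hσ htu s.tr0 cd t.tr0 cσ ct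

theorem fibreConnected_of_isNTypeFib_one {B A : EffObj} {f : B ⟶ A}
    (h : IsNTypeFib EffPS 1 f) : FibreConnected f := by
  obtain ⟨hf, PY, W, r, s, t, p₁, p₂, m, hpath, hpb, hm₁, hm₂, hm⟩ := h
  obtain ⟨P, hP, cP⟩ := EffFib.exists_section_of_eqv hm.1 hm.2
  obtain ⟨c, hc, cc⟩ := exists_cell_of_path hpath.1 hpath.2.1 hpath.2.2.1
  obtain ⟨k, ⟨hk₁, hk₂⟩, -⟩ := hpb.2 _ _ _ (EffPullback.condition f hf)
  have hs q : s.f0 (P (k.f0 q)) = q.1.1 := calc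
    s.f0 (P (k.f0 q)) = p₁.f0 (m.f0 (P (k.f0 q))) := (EffHom.congr_f0 hm₁ _).symm
    _ = p₁.f0 (k.f0 q) := by rw [hP]
    _ = q.1.1 := EffHom.congr_f0 hk₁ q
  have ht q : t.f0 (P (k.f0 q)) = q.1.2 := calc
    t.f0 (P (k.f0 q)) = p₂.f0 (m.f0 (P (k.f0 q))) := (EffHom.congr_f0 hm₂ _).symm
    _ = p₂.f0 (k.f0 q) := by rw [hP]
    _ = q.1.2 := EffHom.congr_f0 hk₂ q
  refine ((cc.precomp fun q => P (k.f0 q)).comp ((cP.precomp k.f0).comp k.tr0)).toFinds ?_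
  intro q
  rw [← hs q, ← ht q]
  exact hc _

namespace EffObj

variable (A : EffObj) {D : Type} (e : D → A.A) (δ : D → ℕ)
  (he : CompComputes δ fun x => A.α (e x))

def induced : EffObj where
  A := D
  α := δ
  hom x x' := A.hom (e x) (e x')
  idc := A.idc.via e he
  invc := by
    refine A.invc.via (fun y : {p : D × D × ℕ // p.2.2 ∈ A.hom (e p.1) (e p.2.1)} =>
      ⟨(e y.1.1, e y.1.2.1, y.1.2.2), y.2⟩) ?_
    exact ((he.precomp _).comp (CompComputes.proj3_1 _ _ _)).pair
      (((he.precomp _).comp (CompComputes.proj3_2 _ _ _)).pair (CompComputes.proj3_3 _ _ _))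
  compc := by
    refine A.compc.via (fun y : {p : D × D × D × ℕ × ℕ //
        p.2.2.2.1 ∈ A.hom (e p.1) (e p.2.1) ∧ p.2.2.2.2 ∈ A.hom (e p.2.1) (e p.2.2.1)} =>
      ⟨(e y.1.1, e y.1.2.1, e y.1.2.2.1, y.1.2.2.2.1, y.1.2.2.2.2), y.2⟩) ?_
    exact ((he.precomp _).comp (CompComputes.proj5_1 _ _ _ _ _)).pair
      (((he.precomp _).comp (CompComputes.proj5_2 _ _ _ _ _)).pair
        (((he.precomp _).comp (CompComputes.proj5_3 _ _ _ _ _)).pair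
          ((CompComputes.proj5_4 _ _ _ _ _).pair (CompComputes.proj5_5 _ _ _ _ _))))

def inducedHom : A.induced e δ he ⟶ A where
  f0 := e
  f1 _ _ π := π
  tr0 := he
  tr1 := CompComputes.proj3_3 _ _ _

end EffObj

namespace DiscreteImage

variable {B A : EffObj} (f : B ⟶ A)

def Pt : Type := {p : A.A × ℕ // ∃ b, f.f0 b = p.1 ∧ B.α b = p.2}

noncomputable def wit (x : Pt f) : B.A := x.2.choose

theorem f0_wit (x : Pt f) : f.f0 (wit f x) = x.1.1 := x.2.choose_spec.1

theorem α_wit (x : Pt f) : B.α (wit f x) = x.1.2 := x.2.choose_spec.2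

theorem computes_α_fst : CompComputes (fun x : Pt f => x.1.2) fun x => A.α x.1.1 :=
  ((f.tr0.precomp (wit f)).congr_in (α_wit f)).congr_out fun x => by rw [f0_wit]

def obj : EffObj := A.induced (fun x : Pt f => x.1.1) (fun x => x.1.2) (computes_α_fst f)

def proj : obj f ⟶ A := A.inducedHom _ _ _

def toObj : B ⟶ obj f where
  f0 b := ⟨(f.f0 b, B.α b), b, rfl, rfl⟩
  f1 b b' ρ := f.f1 b b' ρ
  tr0 := CompComputes.id _
  tr1 := f.tr1

theorem toObj_comp_proj : toObj f ≫ proj f = f := rfl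

theorem effStdDisc_proj (hf : EffFib f) : EffStdDisc (proj f) := by
  obtain ⟨⟨φ, ψ, pφ, -, hlift⟩, -⟩ := hf
  have c₃ : Computable fun n : ℕ => n.unpair.2.unpair.2 :=
    Primrec.to_comp ((Primrec.snd.comp Primrec.unpair).comp (Primrec.snd.comp Primrec.unpair))
  refine ⟨⟨⟨φ, fun n => Part.some n.unpair.2.unpair.2, pφ, c₃.partrec, ?_⟩, ?_⟩, ?_⟩
  · intro (x : Pt f) a π hπ
    obtain ⟨b', -, hb', -, hφ, -⟩ := hlift (wit f x) a π (by rwa [f0_wit])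
    refine ⟨⟨(a, B.α b'), b', hb', rfl⟩, ⟨π, hπ⟩, rfl, rfl, ?_, by simp⟩
    rwa [α_wit] at hφ
  · refine ⟨fun n => Part.some n.unpair.2.unpair.2.unpair.2,
      ((Primrec.to_comp (Primrec.snd.comp Primrec.unpair)).comp c₃).partrec, ?_⟩
    exact fun _ _ _ π hπ => ⟨⟨π, hπ⟩, rfl, by simp⟩
  · exact fun x x' h₁ h₂ => Subtype.ext (Prod.ext h₁ h₂)

variable {f}

/-- The 1-cells of the homotopy inverse of `toObj f`: lift `π : f (wit x) → f (wit x')` along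
`f`, then connect the endpoint of the lift to `wit x'` inside its fibre. -/
theorem exists_cells_wit (hf : EffFib f) (hc : FibreConnected f) :
    ∃ σ : (obj f).Arrow → ℕ, (∀ y, σ y ∈ B.hom (wit f y.1) (wit f y.2.1)) ∧
      CompComputes (obj f).arrowRealizer σ := by
  have hw₁ : CompComputes (obj f).arrowRealizer fun y : (obj f).Arrow => B.α (wit f y.1) :=
    (CompComputes.proj3_1 _ _ _).congr_out fun y => (α_wit f y.1).symm
  have hw₂ : CompComputes (obj f).arrowRealizer fun y : (obj f).Arrow => B.α (wit f y.2.1) :=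
    (CompComputes.proj3_2 _ _ _).congr_out fun y => (α_wit f y.2.1).symm
  have ha : CompComputes (obj f).arrowRealizer fun y : (obj f).Arrow => A.α y.2.1.1.1 :=
    ((computes_α_fst f).precomp _).comp (CompComputes.proj3_2 _ _ _)
  have hπ (y : (obj f).Arrow) : y.2.2.val ∈ A.hom (f.f0 (wit f y.1)) y.2.1.1.1 :=
    (congrArg (fun a => y.2.2.val ∈ A.hom a y.2.1.1.1) (f0_wit f y.1)).mpr y.2.2.2
  obtain ⟨b, ρ, hb, -, cb, cρ⟩ := hf.lift_computes _ _ _ hπ hw₁ ha (CompComputes.proj3_3 _ _ _)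
  obtain ⟨κ, hκ, cκ⟩ := hc.exists_cell_computes b (fun y => wit f y.2.1)
    (fun y => (hb y).trans (f0_wit f y.2.1).symm) cb hw₂
  exact B.exists_comp_computes _ _ _ _ _ (fun y => (ρ y).2) hκ hw₁ cb hw₂ cρ cκ

theorem effEqv_toObj (hf : EffFib f) (hc : FibreConnected f) : EffEqv (toObj f) := by
  obtain ⟨σ, hσ, cσ⟩ := exists_cells_wit hf hc
  let v : obj f ⟶ B :=
    { f0 := wit f
      f1 x x' ρ := ⟨σ ⟨x, x', ρ⟩, hσ ⟨x, x', ρ⟩⟩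
      tr0 := (CompComputes.id _).congr_out fun x => (α_wit f x).symm
      tr1 := cσ }
  refine ⟨v, ?_, ?_⟩
  · obtain ⟨κ, hκ, cκ⟩ := hc.exists_cell_computes (fun b => wit f ((toObj f).f0 b)) id
      (fun b => f0_wit f _) ((CompComputes.id _).congr_out fun b => (α_wit f _).symm)
      (CompComputes.id _)
    exact cκ.toFinds hκ
  · obtain ⟨ι, hι, cι⟩ := A.exists_id_computes (fun x : Pt f => x.1.1) (computes_α_fst f)
    refine cι.toFinds fun x => ?_
    show ι x ∈ A.hom (f.f0 (wit f x)) x.1.1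
    rw [f0_wit]
    exact hι x

end DiscreteImage

theorem effDisc_of_fibreConnected {B A : EffObj} {f : B ⟶ A} (hf : EffFib f)
    (hc : FibreConnected f) : EffDisc f :=
  ⟨hf, _, _, _, DiscreteImage.effEqv_toObj hf hc, DiscreteImage.effStdDisc_proj f hf,
    DiscreteImage.toObj_comp_proj f⟩

/-- (Using the axiom of choice.)  In the path category `EFF` every
propositional fibration is discrete; consequently the class of discrete
propositional fibrations satisfies propositional resizing: every propositional
fibration belongs to it. -/
theorem EFF_propositional_fibrations_are_discrete :
    (∀ {B A : EffObj} (f : B ⟶ A), IsNTypeFib EffPS 1 f → EffDisc f) ∧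
    (∀ {B A : EffObj} (f : B ⟶ A), IsNTypeFib EffPS 1 f →
      EffDisc f ∧ IsNTypeFib EffPS 1 f) := by
  have disc {B A : EffObj} (f : B ⟶ A) (h : IsNTypeFib EffPS 1 f) : EffDisc f :=
    effDisc_of_fibreConnected h.1 (fibreConnected_of_isNTypeFib_one h)
  exact ⟨disc, fun f h => ⟨disc f h, h⟩⟩

end EffPaper
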